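/- Gauged operators are gauge invariant: for every linear operator O on H_m (not necessarily symmetric) and every i ∈ I, the gauged operator commutes with the local gauge constraint, C_i · 𝒢[O] = 𝒢[O] · C_i. -/

import Mathlib

/-! The map `s ↦ C^s = X(s) ⊗ X_g(∂s)` is a representation of the gauge group `(I → ZMod 2, +)`,
and every `C^s` is its own inverse, so `𝒢[O]` is the group twirl `Σ_s C^s (O ⊗ |f_0⟩⟨f_0|) (C^s)⁻¹`.
Multiplying a twirl by `C_i = C^{χ_i}` on either side only reindexes the sum by `s ↦ s + χ_i`. -/

set_option linter.unusedSectionVars false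

noncomputable section

namespace GaugingFractal

/-- The sign `(-1)^t` attached to a `ZMod 2` exponent. -/
def sgn (t : ZMod 2) : ℂ := (-1 : ℂ) ^ t.val

lemma sgn_mul_self (t : ZMod 2) : sgn t * sgn t = 1 := by
  unfold sgn
  rw [← pow_add, ← two_mul, pow_mul]
  norm_num

lemma zmodfun_add_self {K : Type*} (k : K → ZMod 2) : k + k = 0 := by
  funext j
  exact CharTwo.add_self_eq_zero _

/-- Hilbert space of qubits labelled by a finite set `K`; the computational basis
vector `e_a` is indexed by a pattern `a : K → ZMod 2`. -/
abbrev HS (K : Type*) := EuclideanSpace ℂ (K → ZMod 2)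

section Single
variable {K : Type*} [Fintype K] [DecidableEq K]

/-- Pauli X operator: `X(p) e_a = e_{a+p}`. -/
def XOp (p : K → ZMod 2) : HS K →ₗ[ℂ] HS K where
  toFun ψ := WithLp.toLp 2 (fun a => ψ (a + p))
  map_add' _ _ := rfl
  map_smul' _ _ := rfl

/-- Pauli Z operator: `Z(p) e_a = (-1)^{Σ_i p i * a i} e_a`. -/
def ZOp (p : K → ZMod 2) : HS K →ₗ[ℂ] HS K where
  toFun ψ := WithLp.toLp 2 (fun a => sgn (∑ i, p i * a i) * ψ a)
  map_add' ψ φ := by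
    ext a
    exact mul_add _ _ _
  map_smul' c ψ := by
    ext a
    simp only [RingHom.id_apply, PiLp.smul_apply, smul_eq_mul]
    ring

end Single

section Pair

variable {I J : Type*} [Fintype I] [DecidableEq I] [Fintype J] [DecidableEq J]

/-- Hilbert space of the matter qubits (labelled by `I`) tensored with the gauge
qubits (labelled by `J`): the computational basis vector indexed by `(a, b)`
realizes the tensor product `e_a ⊗ f_b`. -/
abbrev HS2 (I J : Type*) := EuclideanSpace ℂ ((I → ZMod 2) × (J → ZMod 2))

/-- `X(p) ⊗ X_g(q)` on `H_m ⊗ H_g`. -/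
def XXOp (p : I → ZMod 2) (q : J → ZMod 2) : HS2 I J →ₗ[ℂ] HS2 I J where
  toFun ψ := WithLp.toLp 2 (fun ab => ψ (ab.1 + p, ab.2 + q))
  map_add' _ _ := rfl
  map_smul' _ _ := rfl

/-- `X(p) ⊗ Z_g(q)` on `H_m ⊗ H_g`. -/
def XZOp (p : I → ZMod 2) (q : J → ZMod 2) : HS2 I J →ₗ[ℂ] HS2 I J where
  toFun ψ := WithLp.toLp 2 (fun ab => sgn (∑ j, q j * ab.2 j) * ψ (ab.1 + p, ab.2))
  map_add' ψ φ := by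
    ext ab
    exact mul_add _ _ _
  map_smul' c ψ := by
    ext ab
    simp only [RingHom.id_apply, PiLp.smul_apply, smul_eq_mul]
    ring

/-- `Z(p) ⊗ X_g(q)` on `H_m ⊗ H_g`. -/
def ZXOp (p : I → ZMod 2) (q : J → ZMod 2) : HS2 I J →ₗ[ℂ] HS2 I J where
  toFun ψ := WithLp.toLp 2 (fun ab => sgn (∑ i, p i * ab.1 i) * ψ (ab.1, ab.2 + q))
  map_add' ψ φ := by
    ext ab
    exact mul_add _ _ _
  map_smul' c ψ := by
    ext ab
    simp only [RingHom.id_apply, PiLp.smul_apply, smul_eq_mul]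
    ring

/-- The flux operator `1 ⊗ Z_g(k)` on `H_m ⊗ H_g`. -/
def IZOp (k : J → ZMod 2) : HS2 I J →ₗ[ℂ] HS2 I J := XZOp 0 k

variable (A : J → Finset I)

/-- The boundary map `∂ : (I → ZMod 2) → (J → ZMod 2)`, `(∂p)(j) = Σ_{i ∈ A j} p(i)`. -/
def bnd (p : I → ZMod 2) : J → ZMod 2 := fun j => ∑ i ∈ A j, p i

/-- The coboundary map `δ : (J → ZMod 2) → (I → ZMod 2)`, `(δk)(i) = Σ_{j : i ∈ A j} k(j)`. -/
def cobnd (k : J → ZMod 2) : I → ZMod 2 :=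
  fun i => ∑ j ∈ Finset.univ.filter (fun j => i ∈ A j), k j

/-- The indicator pattern `χ_i` of a matter qubit `i`. -/
def chi (i : I) : I → ZMod 2 := Pi.single i 1

/-- The indicator pattern `κ_j` of a gauge qubit `j`. -/
def kap (j : J) : J → ZMod 2 := Pi.single j 1

/-- The local gauge constraint `C_i = X(χ_i) ⊗ X_g(∂χ_i)`. -/
def C (i : I) : HS2 I J →ₗ[ℂ] HS2 I J := XXOp (chi i) (bnd A (chi i))

lemma XXOp_mul (p p' : I → ZMod 2) (q q' : J → ZMod 2) :
    (XXOp p q : Module.End ℂ (HS2 I J)) * XXOp p' q' = XXOp (p + p') (q + q') := by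
  apply LinearMap.ext
  intro ψ
  ext ab
  show ψ (ab.1 + p + p', ab.2 + q + q') = ψ (ab.1 + (p + p'), ab.2 + (q + q'))
  rw [add_assoc, add_assoc]

lemma C_commute (i i' : I) : Commute (C A i) (C A i') := by
  show C A i * C A i' = C A i' * C A i
  unfold C
  rw [XXOp_mul, XXOp_mul, add_comm (chi i) (chi i'),
    add_comm (bnd A (chi i)) (bnd A (chi i'))]

/-- The product of gauge constraints `C^s = Π_{i : s i = 1} C_i`. -/
def Cprod (s : I → ZMod 2) : Module.End ℂ (HS2 I J) :=
  (Finset.univ.filter fun i => s i = 1).noncommProd (fun i => C A i)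
    (fun i _ j _ _ => C_commute A i j)

lemma Chalf_commute (i i' : I) :
    Commute ((2 : ℂ)⁻¹ • (1 + C A i)) ((2 : ℂ)⁻¹ • (1 + C A i')) := by
  have h : Commute (1 + C A i) (1 + C A i') :=
    (Commute.one_left _).add_left ((Commute.one_right _).add_right (C_commute A i i'))
  exact (h.smul_left _).smul_right _

/-- The projector `P = Π_{i ∈ I} (1 + C_i)/2` onto the gauge invariant subspace. -/
def Pproj : Module.End ℂ (HS2 I J) :=
  Finset.univ.noncommProd (fun i => (2 : ℂ)⁻¹ • (1 + C A i))
    (fun i _ j _ _ => Chalf_commute A i j)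

/-- `ψ ↦ ψ ⊗ f_0`, the inclusion `1_m ⊗ |f_0⟩ : H_m → H_m ⊗ H_g` determined by the
all-zeros gauge basis vector `f_0`. -/
def incl : HS I →ₗ[ℂ] HS2 I J where
  toFun ψ := WithLp.toLp 2 (fun ab => if ab.2 = 0 then ψ ab.1 else 0)
  map_add' ψ φ := by
    ext ab
    by_cases h : ab.2 = 0 <;> simp [h]
  map_smul' c ψ := by
    ext ab
    by_cases h : ab.2 = 0 <;> simp [h]

/-- The compression `1_m ⊗ ⟨f_0| : H_m ⊗ H_g → H_m`. -/
def res0 : HS2 I J →ₗ[ℂ] HS I where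
  toFun ψ := WithLp.toLp 2 (fun a => ψ (a, 0))
  map_add' _ _ := rfl
  map_smul' _ _ := rfl

/-- The state gauging map `G ψ = P (ψ ⊗ f_0)`. -/
def Gmap : HS I →ₗ[ℂ] HS2 I J := Pproj A ∘ₗ incl

/-- The operator gauging map `𝒢[O] = Σ_{s : I → ZMod 2} C^s (O ⊗ |f_0⟩⟨f_0|) C^s`,
where `O ⊗ |f_0⟩⟨f_0| = incl ∘ O ∘ res0`. -/
def gaugeOp (O : Module.End ℂ (HS I)) : Module.End ℂ (HS2 I J) :=
  ∑ s : I → ZMod 2, Cprod A s * (incl ∘ₗ O ∘ₗ res0) * Cprod A s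

/-- The joint fixed subspace `{v | C_i v = v for all i}` of the gauge constraints. -/
def fixedSub : Submodule ℂ (HS2 I J) where
  carrier := {v | ∀ i, C A i v = v}
  add_mem' := by
    intro x y hx hy i
    rw [map_add, hx i, hy i]
  zero_mem' := by
    intro i
    simp
  smul_mem' := by
    intro c x hx i
    rw [map_smul, hx i]

/-- The symmetric subspace `{ψ | X(s) ψ = ψ for all s with ∂s = 0}` of the matter space. -/
def symmSub : Submodule ℂ (HS I) where
  carrier := {ψ | ∀ s, bnd A s = 0 → XOp s ψ = ψ}
  add_mem' := by
    intro x y hx hy s hs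
    rw [map_add, hx s hs, hy s hs]
  zero_mem' := by
    intro s hs
    simp
  smul_mem' := by
    intro c x hx s hs
    rw [map_smul, hx s hs]

/-- The cluster stabilizer `K_i = X(χ_i) ⊗ Z_g(∂χ_i)`. -/
def Kst (i : I) : Module.End ℂ (HS2 I J) := XZOp (chi i) (bnd A (chi i))

/-- The cluster stabilizer `L_j = Z(δκ_j) ⊗ X_g(κ_j)`. -/
def Lst (j : J) : Module.End ℂ (HS2 I J) := ZXOp (cobnd A (kap j)) (kap j)

/-- The disentangling circuit of controlled-X gates from each matter qubit to its
adjacent gauge qubits: `V (e_a ⊗ f_b) = e_a ⊗ f_{b + ∂a}`. -/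
def Vequiv : HS2 I J ≃ₗ[ℂ] HS2 I J where
  toFun ψ := WithLp.toLp 2 (fun ab => ψ (ab.1, ab.2 + bnd A ab.1))
  invFun ψ := WithLp.toLp 2 (fun ab => ψ (ab.1, ab.2 + bnd A ab.1))
  map_add' _ _ := rfl
  map_smul' _ _ := rfl
  left_inv ψ := by
    ext ab
    show ψ (ab.1, ab.2 + bnd A ab.1 + bnd A ab.1) = ψ ab
    rw [add_assoc, zmodfun_add_self, add_zero]
  right_inv ψ := by
    ext ab
    show ψ (ab.1, ab.2 + bnd A ab.1 + bnd A ab.1) = ψ ab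
    rw [add_assoc, zmodfun_add_self, add_zero]

/-- The circuit of controlled-Z gates along the edges of the bipartite graph:
`U (e_a ⊗ f_b) = (-1)^{Σ_j (∂a)(j)·b(j)} e_a ⊗ f_b`. -/
def Uequiv : HS2 I J ≃ₗ[ℂ] HS2 I J where
  toFun ψ := WithLp.toLp 2 (fun ab => sgn (∑ j, bnd A ab.1 j * ab.2 j) * ψ ab)
  invFun ψ := WithLp.toLp 2 (fun ab => sgn (∑ j, bnd A ab.1 j * ab.2 j) * ψ ab)
  map_add' ψ φ := by
    ext ab
    exact mul_add _ _ _
  map_smul' c ψ := by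
    ext ab
    simp only [RingHom.id_apply, PiLp.smul_apply, smul_eq_mul]
    ring
  left_inv ψ := by
    ext ab
    show sgn _ * (sgn _ * ψ ab) = ψ ab
    rw [← mul_assoc, sgn_mul_self, one_mul]
  right_inv ψ := by
    ext ab
    show sgn _ * (sgn _ * ψ ab) = ψ ab
    rw [← mul_assoc, sgn_mul_self, one_mul]


theorem _root_.AddChar.noncommProd_eq_apply_sum {ι A M : Type*} [AddCommMonoid A] [Monoid M]
    (ψ : AddChar A M) (T : Finset ι) (g : ι → A) (comm) :
    T.noncommProd (fun i => ψ (g i)) comm = ψ (∑ i ∈ T, g i) := by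
  classical
  induction T using Finset.induction_on with
  | empty => simp
  | insert a T ha ih =>
    rw [Finset.noncommProd_insert_of_notMem _ _ _ _ ha, ih, Finset.sum_insert ha,
      AddChar.map_add_eq_mul]

theorem _root_.AddChar.commute_sum_mul_mul_neg {G M : Type*} [AddGroup G] [Fintype G]
    [Semiring M] (ψ : AddChar G M) (X : M) (t : G) :
    Commute (ψ t) (∑ s, ψ s * X * ψ (-s)) := by
  refine (Finset.mul_sum _ _ _).trans <| .trans ?_ (Finset.sum_mul _ _ _).symm
  refine Fintype.sum_equiv (Equiv.addLeft t) _ _ fun s => ?_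
  have hneg : -(t + s) + t = -s := by rw [neg_add_rev, neg_add_cancel_right]
  change ψ t * (ψ s * X * ψ (-s)) = ψ (t + s) * X * ψ (-(t + s)) * ψ t
  rw [mul_assoc _ (ψ (-(t + s))), ← AddChar.map_add_eq_mul, hneg, ← mul_assoc, ← mul_assoc,
    ← AddChar.map_add_eq_mul]

lemma bnd_zero : bnd A (0 : I → ZMod 2) = 0 := by
  funext j
  simp [bnd]

lemma bnd_add (p p' : I → ZMod 2) : bnd A (p + p') = bnd A p + bnd A p' := by
  funext j
  simp [bnd, Finset.sum_add_distrib]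

lemma XXOp_zero : (XXOp 0 0 : Module.End ℂ (HS2 I J)) = 1 := by
  apply LinearMap.ext
  intro ψ
  ext ab
  show ψ (ab.1 + 0, ab.2 + 0) = ψ ab
  rw [add_zero, add_zero]

def gaugeChar : AddChar (I → ZMod 2) (Module.End ℂ (HS2 I J)) where
  toFun s := XXOp s (bnd A s)
  map_zero_eq_one' := by rw [bnd_zero, XXOp_zero]
  map_add_eq_mul' s t := by rw [XXOp_mul, bnd_add]

lemma C_eq_gaugeChar (i : I) : C A i = gaugeChar A (chi i) := rfl

lemma sum_filter_eq_one_chi (s : I → ZMod 2) :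
    ∑ i ∈ Finset.univ.filter (fun i => s i = 1), chi i = s := by
  funext a
  have key : ∀ t : ZMod 2, (if t = 1 then (1 : ZMod 2) else 0) = t := by decide
  simp [chi, Finset.sum_apply, Pi.single_apply, key]

lemma Cprod_eq_gaugeChar (s : I → ZMod 2) : Cprod A s = gaugeChar A s := by
  conv_rhs => rw [← sum_filter_eq_one_chi s]
  exact (gaugeChar A).noncommProd_eq_apply_sum _ chi _

/-- Gauged operators are gauge invariant: for every linear operator `O`
on the matter space and every `i`, `C_i · 𝒢[O] = 𝒢[O] · C_i`. -/
theorem gaugeOp_gauge_invariant (A : J → Finset I) (O : Module.End ℂ (HS I)) (i : I) :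
    (C A i : Module.End ℂ (HS2 I J)) * gaugeOp A O = gaugeOp A O * C A i := by
  have twirl : gaugeOp A O = ∑ s, gaugeChar A s * (incl ∘ₗ O ∘ₗ res0) * gaugeChar A (-s) := by
    simp only [gaugeOp, Cprod_eq_gaugeChar, neg_eq_of_add_eq_zero_right (zmodfun_add_self _)]
  rw [twirl, C_eq_gaugeChar]
  exact AddChar.commute_sum_mul_mul_neg _ _ _

end Pair

end GaugingFractal
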